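/- Let d = (d₁,d₂,d₃) ∈ ℝ³ with d₁, d₃ ∈ (-π,0) and d₂ ∈ (0,π), and suppose y⁰ = x⁰ + i·d (with x⁰ ∈ ℝ³) satisfies ∇S(y⁰) = 0. Then Re S restricted to the affine slice {x + i·d : x ∈ ℝ³} attains a strict global maximum at y⁰: for every x ∈ ℝ³ with x ≠ x⁰, Re S(x + i·d) < Re S(y⁰). -/

import Mathlib

/-!
On the slice `y = x + i d` the real part of `S` is additively separable: the quadratic part
contributes a function affine in `x`, and each dilogarithm term depends on one coordinate only.
So it suffices that every coordinate slice `t ↦ Re S` has a strict global maximum at its critical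
point. Since `Li₂'(z) = -Log(1 - z)/z`, the term `i k Li₂(-e^w)` has second derivative
`-i k e^w/(1 + e^w)` and the quadratic term contributes a purely imaginary constant, so along
`w = t + i d` the second derivative of `Re S` is `k e^t sin d / |1 + e^w|²`. With
`k = 1, -1, 3` and the sign conditions on `d`, this is negative, so each coordinate slice has
strictly decreasing derivative.
-/

open Real

/-- The dilogarithm `Li₂(z) = -∫₀¹ Log(1 - z t)/t dt`. -/
noncomputable def Li2 (z : ℂ) : ℂ :=
  -∫ t in (0:ℝ)..1, Complex.log (1 - z * (t : ℂ)) / (t : ℂ)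

/-- The potential function `S`. -/
noncomputable def pot (y₁ y₂ y₃ : ℂ) : ℂ :=
  Complex.I * (y₁ ^ 2 - y₁ * y₂ + y₂ * y₃ + y₃ ^ 2 / 2) +
    (-(π : ℂ) * y₁ + (π : ℂ) * y₃) +
    Complex.I * Li2 (-Complex.exp y₁) - Complex.I * Li2 (-Complex.exp y₂) +
    3 * Complex.I * Li2 (-Complex.exp y₃)

open Complex (slitPlane I)
open Set Metric MeasureTheory intervalIntegral

lemma one_sub_mul_ofReal_mem_slitPlane {z : ℂ} (hz : 1 - z ∈ slitPlane) {t : ℝ}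
    (ht : t ∈ Icc 0 1) : 1 - z * t ∈ slitPlane := by
  have := Complex.starConvex_one_slitPlane.add_smul_mem (y := -z)
    (by rwa [← sub_eq_add_neg]) ht.1 ht.2
  rwa [Complex.real_smul, mul_neg, ← sub_eq_add_neg, mul_comm] at this

lemma intervalIntegrable_log_one_sub_mul_div {z : ℂ} (hz : 1 - z ∈ slitPlane) :
    IntervalIntegrable (fun t : ℝ => Complex.log (1 - z * t) / t) volume 0 1 := by
  set g : ℝ → ℂ := fun t => Complex.log (1 - z * t)
  set U : Set ℝ := {t | 1 - z * t ∈ slitPlane}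
  have hU : IsOpen U := Complex.isOpen_slitPlane.preimage (by fun_prop)
  have hIcc : Icc 0 1 ⊆ U := fun t ht => one_sub_mul_ofReal_mem_slitPlane hz ht
  have hg : ∀ t ∈ U, DifferentiableAt ℝ g t := fun t ht =>
    ((((hasDerivAt_id (t : ℂ)).const_mul z).const_sub 1).clog ht).comp_ofReal.differentiableAt
  have h0 : (0 : ℝ) ∈ U := hIcc (left_mem_Icc.2 zero_le_one)
  -- `log (1 - z t) / t` is the difference quotient of `g` at `0`, so it extends continuously to `0`
  have hslope : ContinuousOn (dslope g 0) (Icc 0 1) :=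
    ((continuousOn_dslope (hU.mem_nhds h0)).2
      ⟨fun t ht => (hg t ht).continuousAt.continuousWithinAt, hg 0 h0⟩).mono hIcc
  refine (hslope.intervalIntegrable_of_Icc zero_le_one).congr fun t ht => ?_
  have ht0 : t ≠ 0 := (uIoc_of_le (zero_le_one (α := ℝ)) ▸ ht).1.ne'
  simp [dslope_of_ne _ ht0, slope_def_module, g, div_eq_inv_mul]

theorem hasDerivAt_Li2 {z : ℂ} (hz : 1 - z ∈ slitPlane) (hz0 : z ≠ 0) :
    HasDerivAt Li2 (-Complex.log (1 - z) / z) z := by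
  obtain ⟨ε, hε, hball⟩ := nhds_basis_closedBall.mem_iff.1
    ((Complex.isOpen_slitPlane.preimage (continuous_const.sub continuous_id)).mem_nhds hz)
  have hmem : ∀ x ∈ closedBall z ε, ∀ t ∈ Icc (0:ℝ) 1, 1 - x * t ∈ slitPlane :=
    fun x hx t ht => one_sub_mul_ofReal_mem_slitPlane (hball hx) ht
  obtain ⟨C, hC⟩ :=
    ((isCompact_closedBall z ε).prod isCompact_Icc).exists_bound_of_continuousOn
    (f := fun p : ℂ × ℝ => (1 - p.1 * p.2)⁻¹)
    (ContinuousOn.inv₀ (by fun_prop) fun p hp => Complex.slitPlane_ne_zero (hmem _ hp.1 _ hp.2))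
  have hsub : uIoc (0 : ℝ) 1 ⊆ Icc 0 1 :=
    uIcc_of_le (zero_le_one (α := ℝ)) ▸ uIoc_subset_uIcc
  have key := hasDerivAt_integral_of_dominated_loc_of_deriv_le (μ := volume) (a := 0) (b := 1)
    (F := fun x t => Complex.log (1 - x * t) / t) (F' := fun x t => -(1 - x * t)⁻¹)
    (bound := fun _ => C) (closedBall_mem_nhds z hε)
    (Filter.eventually_of_mem (closedBall_mem_nhds z hε) fun x hx =>
      (intervalIntegrable_log_one_sub_mul_div (hball hx)).def'.aestronglyMeasurable)
    (intervalIntegrable_log_one_sub_mul_div hz)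
    ?_ ?_ intervalIntegrable_const ?_
  · have hint := Complex.log_inv_eq_integral hz
    rw [Complex.log_inv _ (Complex.slitPlane_arg_ne_pi hz)] at hint
    refine key.2.neg.congr_deriv ?_
    rw [intervalIntegral.integral_neg, neg_neg, eq_div_iff hz0, mul_comm, hint]
    simp [Complex.real_smul, mul_comm]
  · refine ContinuousOn.aestronglyMeasurable ?_ measurableSet_uIoc
    refine (ContinuousOn.inv₀ (by fun_prop) fun t ht => ?_).neg
    exact Complex.slitPlane_ne_zero (hmem z (mem_closedBall_self hε.le) t (hsub ht))
  · refine ae_of_all _ fun t ht x hx => ?_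
    rw [norm_neg]
    exact hC (x, t) ⟨hx, hsub ht⟩
  · refine ae_of_all _ fun t ht x hx => ?_
    have hslit := hmem x hx t (hsub ht)
    refine ((((hasDerivAt_id x).mul_const (t : ℂ)).const_sub 1).clog hslit).div_const (t : ℂ)
      |>.congr_deriv ?_
    rw [uIoc_of_le zero_le_one] at ht
    have : (t : ℂ) ≠ 0 := by exact_mod_cast ht.1.ne'
    simp only [id]
    field_simp [Complex.slitPlane_ne_zero hslit]

lemma one_add_exp_mem_slitPlane {w : ℂ} (hw : Real.sin w.im ≠ 0) :
    1 + Complex.exp w ∈ slitPlane :=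
  Complex.mem_slitPlane_iff.2 <| Or.inr <| by simp [Complex.exp_im, hw]

lemma hasDerivAt_Li2_neg_exp {w : ℂ} (hw : 1 + Complex.exp w ∈ slitPlane) :
    HasDerivAt (fun w => Li2 (-Complex.exp w)) (-Complex.log (1 + Complex.exp w)) w := by
  have hexp := Complex.exp_ne_zero w
  have h := (hasDerivAt_Li2 (z := -Complex.exp w) (by rwa [sub_neg_eq_add])
    (neg_ne_zero.2 hexp)).comp w (Complex.hasDerivAt_exp w).neg
  refine h.congr_deriv ?_
  rw [sub_neg_eq_add]
  field_simp

lemma Complex.im_div_one_add (z : ℂ) : (z / (1 + z)).im = z.im / Complex.normSq (1 + z) := by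
  simp only [Complex.div_im, Complex.add_re, Complex.one_re, Complex.add_im, Complex.one_im,
    zero_add]
  ring

theorem lt_of_hasDerivAt_of_strictAnti {h φ : ℝ → ℝ} (hd : ∀ t, HasDerivAt h (φ t) t)
    (hφ : StrictAnti φ) {t₀ t : ℝ} (h₀ : φ t₀ = 0) (ht : t ≠ t₀) : h t < h t₀ := by
  have hcont : Continuous h := continuous_iff_continuousAt.2 fun s => (hd s).continuousAt
  rcases ht.lt_or_gt with hlt | hgt
  · have hmono : StrictMonoOn h (Iic t₀) :=
      strictMonoOn_of_deriv_pos (convex_Iic t₀) hcont.continuousOn fun s hs => by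
        rw [interior_Iic] at hs
        rw [(hd s).deriv, ← h₀]
        exact hφ hs
    exact hmono hlt.le self_mem_Iic hlt
  · have hanti : StrictAntiOn h (Ici t₀) :=
      strictAntiOn_of_deriv_neg (convex_Ici t₀) hcont.continuousOn fun s hs => by
        rw [interior_Ici] at hs
        rw [(hd s).deriv, ← h₀]
        exact hφ hs
    exact hanti self_mem_Ici hgt.le hgt

theorem re_lt_of_deriv_eq_zero {P : ℂ → ℂ} {q k d : ℝ} {β γ : ℂ}
    (hP : ∀ w, P w = I * q * w ^ 2 + β * w + γ + I * k * Li2 (-Complex.exp w))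
    (hkd : k * Real.sin d < 0) {t₀ t : ℝ} (hcrit : deriv P (t₀ + d * I) = 0)
    (ht : t ≠ t₀) :
    (P (t + d * I)).re < (P (t₀ + d * I)).re := by
  set P' : ℂ → ℂ := fun w => 2 * I * q * w + β - I * k * Complex.log (1 + Complex.exp w)
  have hslit (s : ℝ) : 1 + Complex.exp (s + d * I) ∈ slitPlane :=
    one_add_exp_mem_slitPlane (by simpa using right_ne_zero_of_mul hkd.ne)
  have hP' (s : ℝ) : HasDerivAt P (P' (s + d * I)) (s + d * I) := by
    rw [funext hP]
    refine ((((hasDerivAt_pow 2 _).const_mul (I * q)).add ((hasDerivAt_id _).const_mul β)).add_const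
      γ).add ((hasDerivAt_Li2_neg_exp (hslit s)).const_mul (I * k)) |>.congr_deriv ?_
    simp only [P']
    push_cast
    ring
  have hP'' (s : ℝ) : HasDerivAt P'
      (2 * I * q - I * k * (Complex.exp (s + d * I) / (1 + Complex.exp (s + d * I))))
      (s + d * I) := by
    refine ((((hasDerivAt_id _).const_mul (2 * I * q)).add_const β).sub
      ((((Complex.hasDerivAt_exp _).const_add 1).clog (hslit s)).const_mul (I * k))).congr_deriv ?_
    ring
  refine lt_of_hasDerivAt_of_strictAnti (φ := fun s => (P' (s + d * I)).re)
    (fun s => ((hP' s).comp_add_const _ _).real_of_complex) ?_ ?_ ht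
  · refine strictAnti_of_deriv_neg fun s => ?_
    rw [((hP'' s).comp_add_const _ _).real_of_complex.deriv]
    have hre : (2 * I * q - I * k * (Complex.exp (s + d * I) / (1 + Complex.exp (s + d * I)))).re
        = k * Real.sin d * Real.exp s / Complex.normSq (1 + Complex.exp (s + d * I)) := by
      simp only [Complex.sub_re, Complex.mul_re, Complex.mul_im, Complex.re_ofNat,
        Complex.im_ofNat, Complex.I_re, Complex.I_im, Complex.ofReal_re, Complex.ofReal_im,
        Complex.im_div_one_add, Complex.exp_im, Complex.add_re, Complex.add_im, mul_zero,
        zero_mul, mul_one, sub_zero, zero_add, add_zero]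
      ring
    rw [hre]
    exact div_neg_of_neg_of_pos (mul_neg_of_neg_of_pos hkd (Real.exp_pos s))
      (Complex.normSq_pos.2 (Complex.slitPlane_ne_zero (hslit s)))
  · rw [← (hP' t₀).deriv, hcrit, Complex.zero_re]

theorem lt_of_sub_eq_sum_update_sub {ι : Type*} [Fintype ι] [DecidableEq ι]
    {F : (ι → ℝ) → ℝ} {b x : ι → ℝ}
    (hsep : F x - F b = ∑ j, (F (Function.update b j (x j)) - F b))
    (hcoord : ∀ j, ∀ t ≠ b j, F (Function.update b j t) < F b) (hx : x ≠ b) :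
    F x < F b := by
  obtain ⟨j, hj⟩ := Function.ne_iff.1 hx
  have hneg : ∑ j, (F (Function.update b j (x j)) - F b) < ∑ _j : ι, 0 := by
    refine Finset.sum_lt_sum (fun i _ => ?_) ⟨j, Finset.mem_univ j, sub_neg.2 (hcoord j _ hj)⟩
    rcases eq_or_ne (x i) (b i) with hi | hi
    · rw [hi, Function.update_eq_self, sub_self]
    · exact (sub_neg.2 (hcoord i _ hi)).le
  rw [Finset.sum_const_zero] at hneg
  linarith

noncomputable def rePotSlice (d₁ d₂ d₃ : ℝ) (x : Fin 3 → ℝ) : ℝ :=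
  (pot (x 0 + d₁ * I) (x 1 + d₂ * I) (x 2 + d₃ * I)).re

lemma rePotSlice_sub_eq_sum (d₁ d₂ d₃ : ℝ) (x b : Fin 3 → ℝ) :
    rePotSlice d₁ d₂ d₃ x - rePotSlice d₁ d₂ d₃ b =
      ∑ j, (rePotSlice d₁ d₂ d₃ (Function.update b j (x j)) -
        rePotSlice d₁ d₂ d₃ b) := by
  simp only [rePotSlice, Fin.sum_univ_three, Function.update_apply, Fin.isValue, Fin.reduceEq,
    if_true, if_false]
  simp only [pot, pow_two, Complex.add_re, Complex.add_im, Complex.sub_re, Complex.sub_im,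
    Complex.mul_re, Complex.mul_im, Complex.neg_re, Complex.neg_im, Complex.div_ofNat_re,
    Complex.div_ofNat_im, Complex.re_ofNat, Complex.im_ofNat, Complex.I_re, Complex.I_im,
    Complex.ofReal_re, Complex.ofReal_im]
  ring

lemma re_pot_lt_of_deriv_fst {y₂ y₃ : ℂ} {d t₀ t : ℝ} (hd : Real.sin d < 0)
    (hcrit : deriv (fun w => pot w y₂ y₃) (t₀ + d * I) = 0) (ht : t ≠ t₀) :
    (pot (t + d * I) y₂ y₃).re < (pot (t₀ + d * I) y₂ y₃).re :=
  re_lt_of_deriv_eq_zero (q := 1) (k := 1) (β := -(I * y₂) - π)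
    (γ := I * (y₂ * y₃ + y₃ ^ 2 / 2) + π * y₃ - I * Li2 (-Complex.exp y₂)
      + 3 * I * Li2 (-Complex.exp y₃))
    (fun w => by simp only [pot]; push_cast; ring) (by linarith) hcrit ht

lemma re_pot_lt_of_deriv_snd {y₁ y₃ : ℂ} {d t₀ t : ℝ} (hd : 0 < Real.sin d)
    (hcrit : deriv (fun w => pot y₁ w y₃) (t₀ + d * I) = 0) (ht : t ≠ t₀) :
    (pot y₁ (t + d * I) y₃).re < (pot y₁ (t₀ + d * I) y₃).re :=
  re_lt_of_deriv_eq_zero (q := 0) (k := -1) (β := I * (y₃ - y₁))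
    (γ := I * (y₁ ^ 2 + y₃ ^ 2 / 2) - π * y₁ + π * y₃ + I * Li2 (-Complex.exp y₁)
      + 3 * I * Li2 (-Complex.exp y₃))
    (fun w => by simp only [pot]; push_cast; ring) (by linarith) hcrit ht

lemma re_pot_lt_of_deriv_thd {y₁ y₂ : ℂ} {d t₀ t : ℝ} (hd : Real.sin d < 0)
    (hcrit : deriv (fun w => pot y₁ y₂ w) (t₀ + d * I) = 0) (ht : t ≠ t₀) :
    (pot y₁ y₂ (t + d * I)).re < (pot y₁ y₂ (t₀ + d * I)).re :=
  re_lt_of_deriv_eq_zero (q := 1 / 2) (k := 3) (β := I * y₂ + π)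
    (γ := I * (y₁ ^ 2 - y₁ * y₂) - π * y₁ + I * Li2 (-Complex.exp y₁)
      - I * Li2 (-Complex.exp y₂))
    (fun w => by simp only [pot]; push_cast; ring) (by linarith) hcrit ht

/-- if `∇S` vanishes at `y⁰ = x⁰ + i d` on an admissible slice,
then `Re S` restricted to that slice has a strict global maximum at `y⁰`. -/
theorem reS_strict_global_max (d₁ d₂ d₃ : ℝ)
    (hd₁ : d₁ ∈ Set.Ioo (-π) 0) (hd₂ : d₂ ∈ Set.Ioo 0 π)
    (hd₃ : d₃ ∈ Set.Ioo (-π) 0) (x₀ : Fin 3 → ℝ)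
    (hcrit :
      deriv (fun w => pot w ((x₀ 1 : ℂ) + (d₂ : ℂ) * Complex.I)
          ((x₀ 2 : ℂ) + (d₃ : ℂ) * Complex.I))
        ((x₀ 0 : ℂ) + (d₁ : ℂ) * Complex.I) = 0 ∧
      deriv (fun w => pot ((x₀ 0 : ℂ) + (d₁ : ℂ) * Complex.I) w
          ((x₀ 2 : ℂ) + (d₃ : ℂ) * Complex.I))
        ((x₀ 1 : ℂ) + (d₂ : ℂ) * Complex.I) = 0 ∧
      deriv (fun w => pot ((x₀ 0 : ℂ) + (d₁ : ℂ) * Complex.I)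
          ((x₀ 1 : ℂ) + (d₂ : ℂ) * Complex.I) w)
        ((x₀ 2 : ℂ) + (d₃ : ℂ) * Complex.I) = 0) :
    ∀ x : Fin 3 → ℝ, x ≠ x₀ →
      (pot ((x 0 : ℂ) + (d₁ : ℂ) * Complex.I)
           ((x 1 : ℂ) + (d₂ : ℂ) * Complex.I)
           ((x 2 : ℂ) + (d₃ : ℂ) * Complex.I)).re <
      (pot ((x₀ 0 : ℂ) + (d₁ : ℂ) * Complex.I)
           ((x₀ 1 : ℂ) + (d₂ : ℂ) * Complex.I)
           ((x₀ 2 : ℂ) + (d₃ : ℂ) * Complex.I)).re := by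
  intro x hx
  have hs₁ : Real.sin d₁ < 0 := Real.sin_neg_of_neg_of_neg_pi_lt hd₁.2 hd₁.1
  have hs₂ : 0 < Real.sin d₂ := Real.sin_pos_of_pos_of_lt_pi hd₂.1 hd₂.2
  have hs₃ : Real.sin d₃ < 0 := Real.sin_neg_of_neg_of_neg_pi_lt hd₃.2 hd₃.1
  refine lt_of_sub_eq_sum_update_sub (F := rePotSlice d₁ d₂ d₃)
    (rePotSlice_sub_eq_sum d₁ d₂ d₃ x x₀) (fun j t ht => ?_) hx
  fin_cases j
  · simpa [rePotSlice] using re_pot_lt_of_deriv_fst hs₁ hcrit.1 ht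
  · simpa [rePotSlice] using re_pot_lt_of_deriv_snd hs₂ hcrit.2.1 ht
  · simpa [rePotSlice] using re_pot_lt_of_deriv_thd hs₃ hcrit.2.2 ht
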